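/- Let K be an infinite field and let p be a multilinear polynomial in m variables over K that neither vanishes identically on M_n(K) nor takes only scalar values on M_n(K). Then p takes on a value of degree n: there exist matrices a_1,…,a_m ∈ M_n(K) such that the minimal polynomial of p(a_1,…,a_m) has degree n. -/

import Mathlib

/-!
Grade `M_n(K)` by `ℤ/n`, putting the matrix unit `E_rs` in degree `s - r`. A value of `p` with a
nonzero off-diagonal entry exists (conjugate a non-scalar value by a transvection if it is
diagonal), and after relabelling the entry is `(0, 1)`. By multilinearity the same holds for a
value `V = p(E_{i₁j₁}, …, E_{iₘjₘ})` on matrix units; `V` is homogeneous, so its degree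
`Σ (j_k - i_k)` is `1`. Substituting `A_k = Σ_u x_{k,u} E_{i_k+u, j_k+u}` gives a value of degree
`1` whose entries `(r, r + 1)` are nonzero polynomials in the `x_{k,u}`: they specialise to the
entries of the cyclic shifts of `V`. Over an infinite field they are simultaneously nonzero at
some point, and then `1, v, …, v^(n-1)` are nonzero and of distinct degrees, so the minimal
polynomial of the value `v` has degree `n`.
-/

/-- The multilinear polynomial with coefficients `c : S_m → K`, evaluated at an
`m`-tuple of `n×n` matrices: `(A_1,…,A_m) ↦ Σ_{σ ∈ S_m} c_σ · A_{σ(1)} ⋯ A_{σ(m)}`. -/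
noncomputable def mlEval {K : Type*} [Field K] {m n : ℕ}
    (c : Equiv.Perm (Fin m) → K) (A : Fin m → Matrix (Fin n) (Fin n) K) :
    Matrix (Fin n) (Fin n) K :=
  ∑ σ : Equiv.Perm (Fin m), c σ • (List.ofFn fun k => A (σ k)).prod

open Fin.NatCast

section MultilinearPoly

variable {R A B : Type*} [CommSemiring R] [Semiring A] [Algebra R A] [Semiring B] [Algebra R B]
  {m : ℕ}

variable (R A) in
noncomputable def multilinearPoly (c : Equiv.Perm (Fin m) → R) :
    MultilinearMap R (fun _ : Fin m => A) A :=
  ∑ σ, c σ • (MultilinearMap.mkPiAlgebraFin R m A).domDomCongr σ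

theorem multilinearPoly_apply (c : Equiv.Perm (Fin m) → R) (a : Fin m → A) :
    multilinearPoly R A c a = ∑ σ, c σ • (List.ofFn fun k => a (σ k)).prod := by
  simp [multilinearPoly]

theorem mlEval_eq_multilinearPoly {K : Type*} [Field K] {n : ℕ} (c : Equiv.Perm (Fin m) → K)
    (a : Fin m → Matrix (Fin n) (Fin n) K) :
    mlEval c a = multilinearPoly K (Matrix (Fin n) (Fin n) K) c a :=
  (multilinearPoly_apply c a).symm

theorem map_multilinearPoly {F : Type*} [FunLike F A B] [AlgHomClass F R A B] (φ : F)
    (c : Equiv.Perm (Fin m) → R) (a : Fin m → A) :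
    φ (multilinearPoly R A c a) = multilinearPoly R B c (fun k => φ (a k)) := by
  simp only [multilinearPoly_apply, map_sum, map_smul, map_list_prod, List.map_ofFn]
  rfl

theorem multilinearPoly_mem_graded {ι : Type*} [AddCommMonoid ι] (𝒜 : ι → Submodule R A)
    [SetLike.GradedMonoid 𝒜] (c : Equiv.Perm (Fin m) → R) {a : Fin m → A} (d : Fin m → ι)
    (h : ∀ k, a k ∈ 𝒜 (d k)) : multilinearPoly R A c a ∈ 𝒜 (∑ k, d k) := by
  rw [multilinearPoly_apply]
  refine Submodule.sum_mem _ fun σ _ => Submodule.smul_mem _ _ ?_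
  rw [← Equiv.sum_comp σ d, ← List.sum_ofFn]
  exact SetLike.list_prod_ofFn_mem_graded _ _ fun k => h (σ k)

end MultilinearPoly

theorem Matrix.exists_multilinearPoly_single_apply_ne_zero {R : Type*} [CommSemiring R]
    {m n : ℕ} (c : Equiv.Perm (Fin m) → R) {B : Fin m → Matrix (Fin n) (Fin n) R} {a b : Fin n}
    (h : multilinearPoly R _ c B a b ≠ 0) :
    ∃ i j : Fin m → Fin n, multilinearPoly R _ c (fun k => single (i k) (j k) (1 : R)) a b ≠ 0 := by
  have hB : B = fun k => ∑ q : Fin n × Fin n, B k q.1 q.2 • single q.1 q.2 (1 : R) := by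
    ext1 k
    simp only [smul_single, smul_eq_mul, mul_one, Fintype.sum_prod_type]
    exact matrix_eq_sum_single (B k)
  rw [hB, MultilinearMap.map_sum, sum_apply] at h
  obtain ⟨t, -, ht⟩ := Finset.exists_ne_zero_of_sum_ne_zero h
  refine ⟨fun k => (t k).1, fun k => (t k).2, fun h0 => ht ?_⟩
  rw [MultilinearMap.map_smul_univ, smul_apply, h0, smul_zero]

theorem Equiv.Perm.exists_apply_eq_and_apply_eq {α : Type*} [DecidableEq α] {a b c d : α}
    (hab : a ≠ b) (hcd : c ≠ d) : ∃ π : Equiv.Perm α, π a = c ∧ π b = d := by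
  refine ⟨(swap a c).trans (swap (swap a c b) d), ?_, by simp⟩
  have hc : c ≠ swap a c b := fun h => hab ((swap a c).injective (by rw [← h, swap_apply_left]))
  rw [trans_apply, swap_apply_left, swap_apply_of_ne_of_ne hc hcd]

theorem MvPolynomial.exists_forall_eval_ne_zero {R σ ι : Type*} [CommRing R] [IsDomain R]
    [Infinite R] [Fintype ι] {P : ι → MvPolynomial σ R} (hP : ∀ i, P i ≠ 0) :
    ∃ x : σ → R, ∀ i, eval x (P i) ≠ 0 := by
  have hprod : ∏ i, P i ≠ 0 := Finset.prod_ne_zero_iff.mpr fun i _ => hP i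
  by_contra! h
  refine hprod (funext fun x => ?_)
  obtain ⟨i, hi⟩ := h x
  rw [map_prod, map_zero, Finset.prod_eq_zero (Finset.mem_univ i) hi]

namespace Matrix

section OffDiagonal

variable {ι R : Type*} [Fintype ι] [DecidableEq ι] [CommRing R]

theorem transvection_mul_mul_transvection_neg_apply (a b : ι) (M : Matrix ι ι R) :
    (transvection a b (1 : R) * M * transvection a b (-1 : R)) a b
      = M a b + M b b - M a a - M b a := by
  rw [mul_transvection_apply_same, transvection_mul_apply_same, transvection_mul_apply_same]
  ring

theorem exists_algEquiv_apply_ne_zero_of_ne_smul_one {M : Matrix ι ι R}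
    (hM : ∀ lam : R, M ≠ lam • 1) :
    ∃ (φ : Matrix ι ι R ≃ₐ[R] Matrix ι ι R) (a b : ι), a ≠ b ∧ φ M a b ≠ 0 := by
  by_contra! h
  have hoff : ∀ a b, a ≠ b → M a b = 0 := h AlgEquiv.refl
  have hdiag : ∀ a b, M a a = M b b := by
    intro a b
    by_cases hab : a = b
    · rw [hab]
    let u : (Matrix ι ι R)ˣ :=
      ⟨transvection a b (1 : R), transvection a b (-1 : R),
        (transvection_mul_transvection_same a b hab _ _).trans (by simp),
        (transvection_mul_transvection_same a b hab _ _).trans (by simp)⟩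
    have hconj := h (MulSemiringAction.toAlgEquiv R _ (ConjAct.toConjAct u)) a b hab
    rw [MulSemiringAction.toAlgEquiv_apply, ConjAct.units_smul_def,
      ConjAct.ofConjAct_toConjAct] at hconj
    change (transvection a b (1 : R) * M * transvection a b (-1 : R)) a b = 0 at hconj
    rw [transvection_mul_mul_transvection_neg_apply, hoff a b hab, hoff b a (Ne.symm hab)]
      at hconj
    linear_combination -hconj
  rcases isEmpty_or_nonempty ι with hι | ⟨⟨a⟩⟩
  · exact hM 0 (Subsingleton.elim _ _)
  · refine hM (M a a) (ext fun r s => ?_)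
    by_cases hrs : r = s
    · rw [hrs, smul_apply, one_apply_eq, smul_eq_mul, mul_one, hdiag]
    · rw [hoff r s hrs, smul_apply, one_apply_ne hrs, smul_zero]

end OffDiagonal

theorem exists_algEquiv_apply_zero_one_ne_zero {n : ℕ} [NeZero n] {R : Type*} [CommSemiring R]
    {M : Matrix (Fin n) (Fin n) R} {a b : Fin n} (hab : a ≠ b) (h : M a b ≠ 0) :
    ∃ φ : Matrix (Fin n) (Fin n) R ≃ₐ[R] Matrix (Fin n) (Fin n) R, φ M 0 1 ≠ 0 := by
  have h01 : (0 : Fin n) ≠ 1 := by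
    have hn : 2 ≤ n := Fin.nontrivial_iff_two_le.mp ⟨⟨a, b, hab⟩⟩
    rw [Ne, Fin.ext_iff, Fin.val_zero, Fin.val_one', Nat.mod_eq_of_lt hn]
    exact zero_ne_one
  obtain ⟨π, hπa, hπb⟩ := Equiv.Perm.exists_apply_eq_and_apply_eq hab h01
  refine ⟨reindexAlgEquiv R R π, ?_⟩
  simpa [← hπa, ← hπb] using h

section CyclicGrading

variable {n : ℕ} (R : Type*) {α : Type*} [Semiring R]

def cyclicDiagonal [AddCommMonoid α] [Module R α] (d : Fin n) :
    Submodule R (Matrix (Fin n) (Fin n) α) where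
  carrier := {M | ∀ r s, s ≠ r + d → M r s = 0}
  add_mem' hM hN r s h := by rw [add_apply, hM r s h, hN r s h, add_zero]
  zero_mem' _ _ _ := rfl
  smul_mem' x M hM r s h := by rw [smul_apply, hM r s h, smul_zero]

variable {R}

theorem mem_cyclicDiagonal [AddCommMonoid α] [Module R α] {d : Fin n}
    {M : Matrix (Fin n) (Fin n) α} : M ∈ cyclicDiagonal R d ↔ ∀ r s, s ≠ r + d → M r s = 0 :=
  Iff.rfl

variable [NeZero n]

theorem single_mem_cyclicDiagonal [AddCommMonoid α] [Module R α] (a b : Fin n) (x : α) :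
    single a b x ∈ cyclicDiagonal R (b - a) := by
  rw [mem_cyclicDiagonal]
  rintro r s h
  refine single_apply_of_ne _ _ _ _ _ ?_
  rintro ⟨rfl, rfl⟩
  exact h (add_sub_cancel a b).symm

instance cyclicDiagonal.gradedMonoid [Semiring α] [Module R α] :
    SetLike.GradedMonoid (cyclicDiagonal R (α := α) (n := n)) where
  one_mem r s (h : s ≠ r + 0) := one_apply_ne' (by rwa [add_zero] at h)
  mul_mem d e M N hM hN r s (h : s ≠ r + (d + e)) := by
    rw [mul_apply]
    refine Finset.sum_eq_zero fun t _ => ?_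
    by_cases ht : t = r + d
    · rw [hN t s (by rwa [ht, add_assoc]), mul_zero]
    · rw [hM r t ht, zero_mul]

theorem pow_apply_zero_natCast_ne_zero [Semiring α] [NoZeroDivisors α] [Nontrivial α]
    [Module R α] {v : Matrix (Fin n) (Fin n) α} (hv : v ∈ cyclicDiagonal R 1)
    (hv' : ∀ r, v r (r + 1) ≠ 0) (k : ℕ) : (v ^ k) 0 k ≠ 0 := by
  induction k with
  | zero => simp
  | succ k ih =>
    rw [pow_succ, mul_apply, Finset.sum_eq_single (k : Fin n), Nat.cast_succ]
    · exact mul_ne_zero ih (hv' _)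
    · intro t _ ht
      rw [SetLike.pow_mem_graded k hv 0 t (by rwa [zero_add, nsmul_one]), zero_mul]
    · simp

theorem le_natDegree_of_aeval_eq_zero {K : Type*} [CommRing K] [IsDomain K]
    {v : Matrix (Fin n) (Fin n) K} (hv : v ∈ cyclicDiagonal K 1) (hv' : ∀ r, v r (r + 1) ≠ 0)
    {p : Polynomial K} (hp : p ≠ 0) (hpv : Polynomial.aeval v p = 0) : n ≤ p.natDegree := by
  by_contra! hlt
  set d := p.natDegree
  have hentry := congr_fun₂ hpv 0 d
  rw [Polynomial.aeval_eq_sum_range, sum_apply, Finset.sum_range_succ, Finset.sum_eq_zero,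
    zero_add] at hentry
  · simp only [smul_apply, smul_eq_mul, zero_apply] at hentry
    exact mul_ne_zero (Polynomial.leadingCoeff_ne_zero.mpr hp)
      (pow_apply_zero_natCast_ne_zero hv hv' d) hentry
  · intro i hi
    have hid : i < d := Finset.mem_range.mp hi
    have hne : (d : Fin n) ≠ 0 + (i : Fin n) := by
      rw [zero_add, Ne, ← Fin.val_inj, Fin.val_cast_of_lt hlt, Fin.val_cast_of_lt (hid.trans hlt)]
      exact hid.ne'
    rw [smul_apply, SetLike.pow_mem_graded i hv 0 d (by rwa [nsmul_one]), smul_zero]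

theorem natDegree_minpoly_of_mem_cyclicDiagonal {K : Type*} [Field K]
    {v : Matrix (Fin n) (Fin n) K} (hv : v ∈ cyclicDiagonal K 1) (hv' : ∀ r, v r (r + 1) ≠ 0) :
    (minpoly K v).natDegree = n := by
  have hint : IsIntegral K v := .of_finite K v
  refine le_antisymm ?_
    (le_natDegree_of_aeval_eq_zero hv hv' (minpoly.ne_zero hint) (minpoly.aeval K v))
  calc (minpoly K v).natDegree ≤ v.charpoly.natDegree :=
        Polynomial.natDegree_le_of_dvd (minpoly_dvd_charpoly v) (charpoly_monic v).ne_zero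
    _ = n := by rw [charpoly_natDegree_eq_dim, Fintype.card_fin]

end CyclicGrading

section ShiftedSingles

variable {m n : ℕ} (i j : Fin m → Fin n)

def shiftedSingles {S : Type*} [AddCommMonoid S] (x : Fin m × Fin n → S) (k : Fin m) :
    Matrix (Fin n) (Fin n) S :=
  ∑ u, single (i k + u) (j k + u) (x (k, u))

theorem map_shiftedSingles {S T F : Type*} [AddCommMonoid S] [AddCommMonoid T] [FunLike F S T]
    [AddMonoidHomClass F S T] (f : F) (x : Fin m × Fin n → S) (k : Fin m) :
    (shiftedSingles i j x k).map f = shiftedSingles i j (fun q => f (x q)) k := by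
  ext r s
  simp [shiftedSingles, sum_apply, single_apply, apply_ite f]

variable [NeZero n]

theorem shiftedSingles_mem_cyclicDiagonal {R S : Type*} [Semiring R] [AddCommMonoid S]
    [Module R S] (x : Fin m × Fin n → S) (k : Fin m) :
    shiftedSingles i j x k ∈ cyclicDiagonal R (j k - i k) := by
  refine Submodule.sum_mem _ fun u _ => ?_
  rw [← add_sub_add_right_eq_sub (j k) (i k) u]
  exact single_mem_cyclicDiagonal _ _ _

theorem shiftedSingles_ite_eq {R : Type*} [CommSemiring R] (r : Fin n) :
    shiftedSingles i j (fun q => if q.2 = r then (1 : R) else 0)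
      = fun k => reindexAlgEquiv R R (Equiv.addRight r) (single (i k) (j k) 1) := by
  ext1 k
  rw [shiftedSingles, Finset.sum_eq_single r (fun u _ hu => by simp [hu]) (by simp),
    coe_reindexAlgEquiv, reindex_apply, submatrix_single_equiv]
  simp

theorem exists_natDegree_minpoly_multilinearPoly_eq {K : Type*} [Field K] [Infinite K]
    (c : Equiv.Perm (Fin m) → K) {i j : Fin m → Fin n}
    (h : multilinearPoly K _ c (fun k => single (i k) (j k) (1 : K)) 0 1 ≠ 0) :
    ∃ a, (minpoly K (multilinearPoly K (Matrix (Fin n) (Fin n) K) c a)).natDegree = n := by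
  have hdeg : ∑ k, (j k - i k) = 1 := by
    by_contra hne
    have hmem := multilinearPoly_mem_graded (cyclicDiagonal K) c
      (a := fun k => single (i k) (j k) (1 : K)) (fun k => j k - i k)
      fun k => single_mem_cyclicDiagonal (i k) (j k) (1 : K)
    exact h (mem_cyclicDiagonal.mp hmem 0 1 (by rwa [zero_add, ne_comm]))
  set W := multilinearPoly K (Matrix (Fin n) (Fin n) (MvPolynomial (Fin m × Fin n) K)) c
    (shiftedSingles i j MvPolynomial.X)
  have hspec : ∀ x, (MvPolynomial.aeval x).mapMatrix W =
      multilinearPoly K (Matrix (Fin n) (Fin n) K) c (shiftedSingles i j x) := by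
    intro x
    rw [map_multilinearPoly]
    simp [map_shiftedSingles]
  -- At the indicator of `u = r` the substitution is the matrix units shifted by `r`.
  have hW : ∀ r, W r (r + 1) ≠ 0 := by
    intro r hr
    apply h
    have hr' := congr_fun₂ (hspec fun q => if q.2 = r then 1 else 0) r (r + 1)
    rw [AlgHom.mapMatrix_apply, map_apply, hr, map_zero, shiftedSingles_ite_eq,
      ← map_multilinearPoly] at hr'
    simpa using hr'.symm
  obtain ⟨x, hx⟩ := MvPolynomial.exists_forall_eval_ne_zero hW
  refine ⟨shiftedSingles i j x, natDegree_minpoly_of_mem_cyclicDiagonal ?_ fun r => ?_⟩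
  · exact hdeg ▸ multilinearPoly_mem_graded _ c _
      fun k => shiftedSingles_mem_cyclicDiagonal i j x k
  · rw [← hspec, AlgHom.mapMatrix_apply, map_apply]
    exact hx r

end ShiftedSingles

end Matrix

theorem exists_value_of_degree_n_general
    {K : Type*} [Field K] [Infinite K] {m n : ℕ}
    (c : Equiv.Perm (Fin m) → K)
    (hns : ∃ A : Fin m → Matrix (Fin n) (Fin n) K,
      ∀ lam : K, mlEval c A ≠ lam • (1 : Matrix (Fin n) (Fin n) K)) :
    ∃ A : Fin m → Matrix (Fin n) (Fin n) K, (minpoly K (mlEval c A)).natDegree = n := by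
  obtain ⟨A, hA⟩ := hns
  obtain ⟨φ, a, b, hab, hφ⟩ := Matrix.exists_algEquiv_apply_ne_zero_of_ne_smul_one hA
  have : NeZero n := NeZero.of_pos a.pos
  obtain ⟨ψ, hψ⟩ := Matrix.exists_algEquiv_apply_zero_one_ne_zero hab hφ
  rw [mlEval_eq_multilinearPoly, ← AlgEquiv.trans_apply, map_multilinearPoly] at hψ
  obtain ⟨i, j, hij⟩ := Matrix.exists_multilinearPoly_single_apply_ne_zero c hψ
  simpa only [mlEval_eq_multilinearPoly] using
    Matrix.exists_natDegree_minpoly_multilinearPoly_eq c hij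

/-- If `K` is an infinite field and the multilinear polynomial `p` neither vanishes
identically on `M_n(K)` nor takes only scalar values on `M_n(K)`, then `p` takes a
value of degree `n`: a value whose minimal polynomial has degree `n`. -/
theorem exists_value_of_degree_n
    {K : Type*} [Field K] [Infinite K] {m n : ℕ}
    (c : Equiv.Perm (Fin m) → K)
    (hnz : ∃ A : Fin m → Matrix (Fin n) (Fin n) K, mlEval c A ≠ 0)
    (hns : ∃ A : Fin m → Matrix (Fin n) (Fin n) K,
      ∀ lam : K, mlEval c A ≠ lam • (1 : Matrix (Fin n) (Fin n) K)) :
    ∃ A : Fin m → Matrix (Fin n) (Fin n) K, (minpoly K (mlEval c A)).natDegree = n :=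
  exists_value_of_degree_n_general c hns
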